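/- Let K, L be convex bodies in ℝ^{n+1}. The Minkowski mixed-volume inequality V_{(1)}(K,L)^{n+1} ≥ Vol(K)^n · Vol(L) holds, where V_{(1)}(K,L) is the first mixed volume defined via Vol((1−t)K + tL) = Σ_{k=0}^{n+1} C(n+1,k)(1−t)^{n+1−k} t^k V_{(k)}(K,L). -/

import Mathlib

/-!
The Prékopa–Leindler inequality on `ℝ` follows from the one-dimensional Brunn–Minkowski
inequality `|A| + |B| ≤ |A + B|` applied to the level sets of the functions, and it passes to
`ℝ^d` by induction on `d` via Fubini. Applied to indicator functions it gives
`Vol(K)^(1-t) Vol(L)^t ≤ Vol((1-t)K + tL)`; rescaling `K` and `L` to unit volume turns this into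
`((1-s) α + s β)^(n+1) ≤ Vol((1-s)K + sL)` with `α^(n+1) = Vol(K)`, `β^(n+1) = Vol(L)`.
Both sides equal `Vol(K)` at `s = 0`, so their right derivatives there compare:
`(n+1) (α^n β - α^(n+1)) ≤ (n+1) (V₁ - V₀)`, i.e. `V₁ ≥ α^n β`, whose `(n+1)`-st power is
the claim.
-/

open scoped Pointwise ENNReal NNReal
open MeasureTheory Set Filter Topology

namespace ENNReal

theorem rpow_mul_rpow_le_add {t : ℝ} (ht₀ : 0 < t) (ht₁ : t < 1) (a b : ℝ≥0∞) :
    a ^ (1 - t) * b ^ t ≤ ENNReal.ofReal (1 - t) * a + ENNReal.ofReal t * b := by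
  have h1t : 0 < 1 - t := by linarith
  rcases eq_or_ne a ∞ with rfl | ha
  · rw [ENNReal.mul_top (by simpa using h1t), top_add]
    exact le_top
  rcases eq_or_ne b ∞ with rfl | hb
  · rw [ENNReal.mul_top (by simpa using ht₀), add_top]
    exact le_top
  lift a to ℝ≥0 using ha
  lift b to ℝ≥0 using hb
  have key := NNReal.geom_mean_le_arith_mean2_weighted ⟨1 - t, h1t.le⟩ ⟨t, ht₀.le⟩ a b
    (NNReal.eq (sub_add_cancel 1 t))
  rw [ENNReal.ofReal_eq_coe_nnreal h1t.le, ENNReal.ofReal_eq_coe_nnreal ht₀.le,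
    ← ENNReal.coe_rpow_of_nonneg _ h1t.le, ← ENNReal.coe_rpow_of_nonneg _ ht₀.le]
  exact_mod_cast key

theorem lt_rpow_mul_rpow {t : ℝ} (ht₀ : 0 < t) (ht₁ : t < 1) {c a b : ℝ≥0∞} (ha : c < a)
    (hb : c < b) : c < a ^ (1 - t) * b ^ t :=
  calc c = c ^ (1 - t) * c ^ t := by
        rw [← ENNReal.rpow_add_of_nonneg _ _ (by linarith) ht₀.le, sub_add_cancel,
          ENNReal.rpow_one]
    _ < a ^ (1 - t) * b ^ t :=
        ENNReal.mul_lt_mul (ENNReal.rpow_lt_rpow ha (by linarith)) (ENNReal.rpow_lt_rpow hb ht₀)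

theorem exists_pos_eq_ofReal_pow {x : ℝ≥0∞} (hx₀ : x ≠ 0) (hx : x ≠ ∞) {d : ℕ} (hd : d ≠ 0) :
    ∃ γ : ℝ, 0 < γ ∧ x = ENNReal.ofReal (γ ^ d) :=
  ⟨x.toReal ^ (d : ℝ)⁻¹, Real.rpow_pos_of_pos (ENNReal.toReal_pos hx₀ hx) _, by
    rw [Real.rpow_inv_natCast_pow ENNReal.toReal_nonneg hd, ENNReal.ofReal_toReal hx]⟩

theorem rpow_iSup {ι : Type*} {p : ℝ} (hp : 0 < p) (s : ι → ℝ≥0∞) :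
    (⨆ i, s i) ^ p = ⨆ i, s i ^ p :=
  (ENNReal.orderIsoRpow p hp).map_iSup s

end ENNReal

section LayerCake

variable {α : Type*} [MeasurableSpace α] (μ : Measure α)

theorem lintegral_eq_setLIntegral_Ioo_measure_lt {f : α → ℝ≥0∞} (hf : Measurable f)
    (hf₁ : ∀ x, f x ≤ 1) :
    ∫⁻ x, f x ∂μ = ∫⁻ u in Ioo (0 : ℝ) 1, μ {x | ENNReal.ofReal u < f x} := by
  have hf_ne_top : ∀ x, f x ≠ ∞ := fun x => ((hf₁ x).trans_lt ENNReal.one_lt_top).ne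
  have hpos : ∀ u ∈ Ioi (0 : ℝ), μ {x | u < (f x).toReal} = μ {x | ENNReal.ofReal u < f x} :=
    fun u hu => congrArg μ <| ext fun x =>
      (ENNReal.ofReal_lt_iff_lt_toReal (le_of_lt hu) (hf_ne_top x)).symm
  have hlarge : ∀ u ∈ Ici (1 : ℝ), μ {x | ENNReal.ofReal u < f x} = 0 := fun u hu => by
    simp only [← not_le, (hf₁ _).trans (ENNReal.one_le_ofReal.mpr hu), not_true_eq_false,
      ofPred_false, measure_empty]
  calc ∫⁻ x, f x ∂μ = ∫⁻ x, ENNReal.ofReal (f x).toReal ∂μ :=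
        lintegral_congr fun x => (ENNReal.ofReal_toReal (hf_ne_top x)).symm
    _ = ∫⁻ u in Ioi 0, μ {x | ENNReal.ofReal u < f x} := by
        rw [lintegral_eq_lintegral_meas_lt μ (.of_forall fun _ => ENNReal.toReal_nonneg)
          hf.ennreal_toReal.aemeasurable, setLIntegral_congr_fun measurableSet_Ioi hpos]
    _ = ∫⁻ u in Ioo (0 : ℝ) 1, μ {x | ENNReal.ofReal u < f x} := by
        rw [← Ioo_union_Ici_eq_Ioi zero_lt_one, lintegral_union measurableSet_Ici
          ((Iio_disjoint_Ici le_rfl).mono_left Ioo_subset_Iio_self),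
          setLIntegral_congr_fun measurableSet_Ici hlarge,
          lintegral_zero, add_zero]

theorem setLIntegral_Ioo_measure_lt_le_lintegral {h : α → ℝ≥0∞} (hh : Measurable h) :
    ∫⁻ u in Ioo (0 : ℝ) 1, μ {x | ENNReal.ofReal u < h x} ≤ ∫⁻ x, h x ∂μ := by
  have hlt : ∀ u ∈ Ioo (0 : ℝ) 1,
      μ {x | ENNReal.ofReal u < h x} = μ {x | ENNReal.ofReal u < min (h x) 1} :=
    fun u hu => by simp only [lt_min_iff, ENNReal.ofReal_lt_one.mpr hu.2, and_true]
  rw [setLIntegral_congr_fun measurableSet_Ioo hlt,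
    ← lintegral_eq_setLIntegral_Ioo_measure_lt μ (hh.min measurable_const)
      fun _ => min_le_right _ _]
  exact lintegral_mono fun _ => min_le_left _ _

theorem measurable_measure_ofReal_lt (f : α → ℝ≥0∞) :
    Measurable fun u : ℝ => μ {x | ENNReal.ofReal u < f x} :=
  Antitone.measurable fun _ _ huv =>
    measure_mono fun _ hx => (ENNReal.ofReal_le_ofReal huv).trans_lt hx

theorem lintegral_eq_iSup_lintegral_min_natCast {f : α → ℝ≥0∞} (hf : Measurable f) :
    ∫⁻ x, f x ∂μ = ⨆ N : ℕ, ∫⁻ x, min (f x) N ∂μ := by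
  rw [← lintegral_iSup (fun N => hf.min measurable_const)
    fun _ _ hNM _ => min_le_min le_rfl (Nat.mono_cast hNM)]
  congr with x
  rw [← inf_iSup_eq, ENNReal.iSup_natCast, inf_top_eq]

end LayerCake

namespace Real

theorem volume_add_volume_le_volume_add_of_isCompact {A B : Set ℝ} (hA : IsCompact A)
    (hB : IsCompact B) (hA₀ : A.Nonempty) (hB₀ : B.Nonempty) :
    volume A + volume B ≤ volume (A + B) := by
  set a := sSup A
  set b := sInf B
  have haA : a ∈ A := hA.sSup_mem hA₀
  have hbB : b ∈ B := hB.sInf_mem hB₀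
  have hinter : (b +ᵥ A) ∩ (a +ᵥ B) ⊆ {a + b} := by
    rintro _ ⟨⟨x, hx, rfl⟩, ⟨y, hy, hyx⟩⟩
    have hxa : x ≤ a := le_csSup hA.bddAbove hx
    have hby : b ≤ y := csInf_le hB.bddBelow hy
    have hyx : a + y = b + x := hyx
    simp only [mem_singleton_iff, vadd_eq_add]
    linarith
  have hunion : (b +ᵥ A) ∪ (a +ᵥ B) ⊆ A + B := by
    rintro _ (⟨x, hx, rfl⟩ | ⟨y, hy, rfl⟩)
    · exact ⟨x, hx, b, hbB, add_comm x b⟩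
    · exact ⟨a, haA, y, hy, rfl⟩
  calc volume A + volume B = volume (b +ᵥ A) + volume (a +ᵥ B) := by
        rw [measure_vadd, measure_vadd]
    _ = volume ((b +ᵥ A) ∪ (a +ᵥ B)) := by
        rw [← measure_union_add_inter _ (hB.vadd a).isClosed.measurableSet,
          measure_mono_null hinter (measure_singleton _), add_zero]
    _ ≤ volume (A + B) := measure_mono hunion

theorem volume_add_volume_le_volume_add {A B : Set ℝ} (hA : MeasurableSet A)
    (hB : MeasurableSet B) (hA₀ : A.Nonempty) (hB₀ : B.Nonempty) :
    volume A + volume B ≤ volume (A + B) := by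
  obtain ⟨a, ha⟩ := hA₀
  obtain ⟨b, hb⟩ := hB₀
  have hcompact : ∀ C ⊆ A, IsCompact C → ∀ D ⊆ B, IsCompact D →
      volume C + volume D ≤ volume (A + B) := fun C hCA hC D hDB hD =>
    calc volume C + volume D ≤ volume (insert a C) + volume (insert b D) := by
          gcongr <;> exact subset_insert _ _
      _ ≤ volume (insert a C + insert b D) :=
          volume_add_volume_le_volume_add_of_isCompact (hC.insert a) (hD.insert b)
            (insert_nonempty _ _) (insert_nonempty _ _)
      _ ≤ volume (A + B) :=
          measure_mono (add_subset_add (insert_subset ha hCA) (insert_subset hb hDB))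
  rw [hA.measure_eq_iSup_isCompact, hB.measure_eq_iSup_isCompact]
  simp only [iSup_and']
  exact ENNReal.biSup_add_biSup_le' ⟨∅, empty_subset _, isCompact_empty⟩
    ⟨∅, empty_subset _, isCompact_empty⟩ fun C hC D hD => hcompact C hC.1 hC.2 D hD.1 hD.2

theorem le_volume_smul_add_smul {t : ℝ} (ht₀ : 0 ≤ t) (ht₁ : t ≤ 1) {A B : Set ℝ}
    (hA : MeasurableSet A) (hB : MeasurableSet B) (hA₀ : A.Nonempty) (hB₀ : B.Nonempty) :
    ENNReal.ofReal (1 - t) * volume A + ENNReal.ofReal t * volume B ≤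
      volume ((1 - t) • A + t • B) := by
  have key := volume_add_volume_le_volume_add (hA.const_smul₀ (1 - t)) (hB.const_smul₀ t)
    hA₀.smul_set hB₀.smul_set
  rwa [Measure.addHaar_smul_of_nonneg _ (by linarith), Measure.addHaar_smul_of_nonneg _ ht₀,
    Module.finrank_self, pow_one, pow_one] at key

variable {t : ℝ} {f g h : ℝ → ℝ≥0∞}

theorem prekopaLeindler_of_iSup_eq_one (ht₀ : 0 < t) (ht₁ : t < 1) (hf : Measurable f)
    (hg : Measurable g) (hh : Measurable h) (hf_sup : ⨆ x, f x = 1) (hg_sup : ⨆ x, g x = 1)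
    (hfgh : ∀ x y, f x ^ (1 - t) * g y ^ t ≤ h ((1 - t) * x + t * y)) :
    ENNReal.ofReal (1 - t) * (∫⁻ x, f x) + ENNReal.ofReal t * ∫⁻ x, g x ≤ ∫⁻ x, h x := by
  have hf₁ : ∀ x, f x ≤ 1 := fun x => hf_sup ▸ le_iSup f x
  have hg₁ : ∀ x, g x ≤ 1 := fun x => hg_sup ▸ le_iSup g x
  have hlevel : ∀ u ∈ Ioo (0 : ℝ) 1,
      ENNReal.ofReal (1 - t) * volume {x | ENNReal.ofReal u < f x} +
        ENNReal.ofReal t * volume {x | ENNReal.ofReal u < g x} ≤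
      volume {x | ENNReal.ofReal u < h x} := by
    intro u hu
    have hu₁ : ENNReal.ofReal u < 1 := ENNReal.ofReal_lt_one.mpr hu.2
    have hf_ne : {x | ENNReal.ofReal u < f x}.Nonempty := by
      obtain ⟨x, hx⟩ := lt_iSup_iff.mp (hf_sup ▸ hu₁); exact ⟨x, hx⟩
    have hg_ne : {x | ENNReal.ofReal u < g x}.Nonempty := by
      obtain ⟨x, hx⟩ := lt_iSup_iff.mp (hg_sup ▸ hu₁); exact ⟨x, hx⟩
    calc _ ≤ volume ((1 - t) • {x | ENNReal.ofReal u < f x} + t • {x | ENNReal.ofReal u < g x}) :=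
          le_volume_smul_add_smul ht₀.le ht₁.le (hf measurableSet_Ioi) (hg measurableSet_Ioi)
            hf_ne hg_ne
      _ ≤ volume {x | ENNReal.ofReal u < h x} := by
          refine measure_mono ?_
          rintro _ ⟨_, ⟨x, hx, rfl⟩, _, ⟨y, hy, rfl⟩, rfl⟩
          exact (ENNReal.lt_rpow_mul_rpow ht₀ ht₁ hx hy).trans_le (hfgh x y)
  calc ENNReal.ofReal (1 - t) * (∫⁻ x, f x) + ENNReal.ofReal t * ∫⁻ x, g x
      = ∫⁻ u in Ioo (0 : ℝ) 1, ENNReal.ofReal (1 - t) * volume {x | ENNReal.ofReal u < f x} +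
          ENNReal.ofReal t * volume {x | ENNReal.ofReal u < g x} := by
        rw [lintegral_eq_setLIntegral_Ioo_measure_lt volume hf hf₁,
          lintegral_eq_setLIntegral_Ioo_measure_lt volume hg hg₁,
          lintegral_add_left ((measurable_measure_ofReal_lt volume f).const_mul _),
          lintegral_const_mul _ (measurable_measure_ofReal_lt volume f),
          lintegral_const_mul _ (measurable_measure_ofReal_lt volume g)]
    _ ≤ ∫⁻ u in Ioo (0 : ℝ) 1, volume {x | ENNReal.ofReal u < h x} :=
        setLIntegral_mono (measurable_measure_ofReal_lt volume h) hlevel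
    _ ≤ ∫⁻ x, h x := setLIntegral_Ioo_measure_lt_le_lintegral volume hh

theorem prekopaLeindler_of_iSup_ne_top (ht₀ : 0 < t) (ht₁ : t < 1) (hf : Measurable f)
    (hg : Measurable g) (hh : Measurable h) (hf_bdd : ⨆ x, f x ≠ ∞) (hg_bdd : ⨆ x, g x ≠ ∞)
    (hfgh : ∀ x y, f x ^ (1 - t) * g y ^ t ≤ h ((1 - t) * x + t * y)) :
    (∫⁻ x, f x) ^ (1 - t) * (∫⁻ x, g x) ^ t ≤ ∫⁻ x, h x := by
  have h1t : 0 < 1 - t := by linarith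
  set Sf := ⨆ x, f x
  set Sg := ⨆ x, g x
  rcases eq_or_ne Sf 0 with hSf | hSf
  · simp [ENNReal.iSup_eq_zero.mp hSf, ENNReal.zero_rpow_of_pos h1t]
  rcases eq_or_ne Sg 0 with hSg | hSg
  · simp [ENNReal.iSup_eq_zero.mp hSg, ENNReal.zero_rpow_of_pos ht₀]
  set c := Sf⁻¹ ^ (1 - t) * Sg⁻¹ ^ t
  have hc₀ : c ≠ 0 := by simp [c, ENNReal.rpow_eq_zero_iff, hf_bdd, hg_bdd, hSf, hSg]
  have hc_top : c ≠ ∞ := by finiteness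
  have hscale : ∀ a b : ℝ≥0∞,
      (Sf⁻¹ * a) ^ (1 - t) * (Sg⁻¹ * b) ^ t = c * (a ^ (1 - t) * b ^ t) := by
    intro a b
    rw [ENNReal.mul_rpow_of_nonneg _ _ h1t.le, ENNReal.mul_rpow_of_nonneg _ _ ht₀.le]
    ring
  have key := prekopaLeindler_of_iSup_eq_one ht₀ ht₁ (hf.const_mul Sf⁻¹) (hg.const_mul Sg⁻¹)
    (hh.const_mul c) (by rw [← ENNReal.mul_iSup, ENNReal.inv_mul_cancel hSf hf_bdd])
    (by rw [← ENNReal.mul_iSup, ENNReal.inv_mul_cancel hSg hg_bdd])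
    fun x y => by rw [hscale]; exact mul_le_mul_right (hfgh x y) c
  rw [lintegral_const_mul _ hf, lintegral_const_mul _ hg, lintegral_const_mul _ hh] at key
  rw [← ENNReal.mul_le_mul_iff_right hc₀ hc_top, ← hscale]
  exact (ENNReal.rpow_mul_rpow_le_add ht₀ ht₁ _ _).trans key

theorem prekopaLeindler (ht₀ : 0 < t) (ht₁ : t < 1) (hf : Measurable f) (hg : Measurable g)
    (hh : Measurable h) (hfgh : ∀ x y, f x ^ (1 - t) * g y ^ t ≤ h ((1 - t) * x + t * y)) :
    (∫⁻ x, f x) ^ (1 - t) * (∫⁻ x, g x) ^ t ≤ ∫⁻ x, h x := by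
  have h1t : 0 < 1 - t := by linarith
  have htrunc : ∀ N M : ℕ,
      (∫⁻ x, min (f x) N) ^ (1 - t) * (∫⁻ x, min (g x) M) ^ t ≤ ∫⁻ x, h x := fun N M =>
    prekopaLeindler_of_iSup_ne_top ht₀ ht₁ (hf.min measurable_const) (hg.min measurable_const) hh
      (ne_top_of_le_ne_top (ENNReal.natCast_ne_top N) (iSup_le fun _ => min_le_right _ _))
      (ne_top_of_le_ne_top (ENNReal.natCast_ne_top M) (iSup_le fun _ => min_le_right _ _))
      fun x y => (mul_le_mul' (ENNReal.rpow_le_rpow (min_le_left _ _) h1t.le)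
        (ENNReal.rpow_le_rpow (min_le_left _ _) ht₀.le)).trans (hfgh x y)
  rw [lintegral_eq_iSup_lintegral_min_natCast volume hf,
    lintegral_eq_iSup_lintegral_min_natCast volume hg, ENNReal.rpow_iSup h1t,
    ENNReal.rpow_iSup ht₀, ENNReal.iSup_mul]
  exact iSup_le fun N => by rw [ENNReal.mul_iSup]; exact iSup_le (htrunc N)

end Real

def SatisfiesPrekopaLeindler (E : Type*) [MeasureSpace E] [AddCommMonoid E] [Module ℝ E] :
    Prop :=
  ∀ ⦃t : ℝ⦄, 0 < t → t < 1 → ∀ ⦃f g h : E → ℝ≥0∞⦄, Measurable f → Measurable g → Measurable h →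
    (∀ x y, f x ^ (1 - t) * g y ^ t ≤ h ((1 - t) • x + t • y)) →
    (∫⁻ x, f x) ^ (1 - t) * (∫⁻ x, g x) ^ t ≤ ∫⁻ x, h x

namespace SatisfiesPrekopaLeindler

variable {E F : Type*} [MeasureSpace E] [AddCommMonoid E] [Module ℝ E]
  [MeasureSpace F] [AddCommMonoid F] [Module ℝ F]

theorem real : SatisfiesPrekopaLeindler ℝ := fun _ ht₀ ht₁ _ _ _ hf hg hh hfgh =>
  Real.prekopaLeindler ht₀ ht₁ hf hg hh hfgh

theorem of_subsingleton [Subsingleton E] : SatisfiesPrekopaLeindler E := by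
  intro t ht₀ ht₁ f g h _ _ _ hfgh
  have hconst : ∀ φ : E → ℝ≥0∞, ∫⁻ x, φ x = φ 0 * volume univ := fun φ => by
    rw [← lintegral_const]
    exact lintegral_congr fun x => congrArg φ (Subsingleton.elim x 0)
  rw [hconst f, hconst g, hconst h, ENNReal.mul_rpow_of_nonneg _ _ (by linarith),
    ENNReal.mul_rpow_of_nonneg _ _ ht₀.le, mul_mul_mul_comm,
    ← ENNReal.rpow_add_of_nonneg _ _ (by linarith) ht₀.le, sub_add_cancel, ENNReal.rpow_one]
  gcongr
  simpa only [Subsingleton.elim _ (0 : E)] using hfgh 0 0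

theorem prod [SFinite (volume : Measure F)] (hE : SatisfiesPrekopaLeindler E)
    (hF : SatisfiesPrekopaLeindler F) : SatisfiesPrekopaLeindler (E × F) := by
  intro t ht₀ ht₁ f g h hf hg hh hfgh
  have hslice : ∀ x₁ x₂ : E, (∫⁻ y, f (x₁, y)) ^ (1 - t) * (∫⁻ y, g (x₂, y)) ^ t ≤
      ∫⁻ y, h ((1 - t) • x₁ + t • x₂, y) := fun x₁ x₂ =>
    hF ht₀ ht₁ (hf.comp measurable_prodMk_left) (hg.comp measurable_prodMk_left)
      (hh.comp measurable_prodMk_left) fun y₁ y₂ => hfgh (x₁, y₁) (x₂, y₂)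
  rw [Measure.volume_eq_prod, lintegral_prod f hf.aemeasurable, lintegral_prod g hg.aemeasurable,
    lintegral_prod h hh.aemeasurable]
  exact hE ht₀ ht₁ hf.lintegral_prod_right' hg.lintegral_prod_right' hh.lintegral_prod_right'
    hslice

theorem of_measurePreserving (φ : E →ₗ[ℝ] F) (hφ : MeasurePreserving φ)
    (hE : SatisfiesPrekopaLeindler E) : SatisfiesPrekopaLeindler F := by
  intro t ht₀ ht₁ f g h hf hg hh hfgh
  rw [← hφ.lintegral_comp hf, ← hφ.lintegral_comp hg, ← hφ.lintegral_comp hh]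
  exact hE ht₀ ht₁ (hf.comp hφ.measurable) (hg.comp hφ.measurable) (hh.comp hφ.measurable)
    fun x y => by simpa only [map_add, map_smul] using hfgh (φ x) (φ y)

theorem pi (d : ℕ) : SatisfiesPrekopaLeindler (Fin d → ℝ) := by
  induction d with
  | zero => exact of_subsingleton
  | succ d ih =>
    refine of_measurePreserving (Fin.consLinearEquiv ℝ fun _ : Fin (d + 1) => ℝ).toLinearMap
      ?_ (real.prod ih)
    have hcons : ⇑(Fin.consLinearEquiv ℝ fun _ : Fin (d + 1) => ℝ) =
        (MeasurableEquiv.piFinSuccAbove (fun _ : Fin (d + 1) => ℝ) 0).symm := by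
      ext x i
      refine Fin.cases ?_ ?_ i <;> simp
    rw [LinearEquiv.coe_coe, hcons]
    exact (volume_preserving_piFinSuccAbove (fun _ : Fin (d + 1) => ℝ) 0).symm

theorem euclideanSpace (d : ℕ) : SatisfiesPrekopaLeindler (EuclideanSpace ℝ (Fin d)) :=
  of_measurePreserving (WithLp.linearEquiv 2 ℝ (Fin d → ℝ)).symm.toLinearMap
    (PiLp.volume_preserving_toLp (Fin d)) (pi d)

theorem volume_rpow_mul_rpow_le (hE : SatisfiesPrekopaLeindler E) {t : ℝ} (ht₀ : 0 < t)
    (ht₁ : t < 1) {A B C : Set E} (hA : MeasurableSet A) (hB : MeasurableSet B)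
    (hC : MeasurableSet C) (hABC : (1 - t) • A + t • B ⊆ C) :
    volume A ^ (1 - t) * volume B ^ t ≤ volume C := by
  have key := hE ht₀ ht₁ (measurable_one.indicator hA) (measurable_one.indicator hB)
    (measurable_one.indicator hC) fun x y => by
      by_cases hx : x ∈ A
      · by_cases hy : y ∈ B
        · simp [hx, hy, hABC (add_mem_add (smul_mem_smul_set hx) (smul_mem_smul_set hy))]
        · simp [hy, ENNReal.zero_rpow_of_pos ht₀]
      · simp [hx, ENNReal.zero_rpow_of_pos (sub_pos.mpr ht₁)]
  simpa only [lintegral_indicator_one hA, lintegral_indicator_one hB,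
    lintegral_indicator_one hC] using key

end SatisfiesPrekopaLeindler

open Module in
theorem SatisfiesPrekopaLeindler.ofReal_add_pow_finrank_le_volume {E : Type*}
    [NormedAddCommGroup E] [NormedSpace ℝ E] [FiniteDimensional ℝ E] [MeasureSpace E]
    [BorelSpace E] [(volume : Measure E).IsAddHaarMeasure] (hE : SatisfiesPrekopaLeindler E)
    {K L : Set E} (hK : IsCompact K) (hL : IsCompact L) {α β : ℝ} (hα : 0 < α) (hβ : 0 < β)
    (hKα : volume K = ENNReal.ofReal (α ^ finrank ℝ E))
    (hLβ : volume L = ENNReal.ofReal (β ^ finrank ℝ E)) {s : ℝ} (hs₀ : 0 < s) (hs₁ : s < 1) :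
    ENNReal.ofReal (((1 - s) * α + s * β) ^ finrank ℝ E) ≤ volume ((1 - s) • K + s • L) := by
  set c := (1 - s) * α + s * β
  have hc : 0 < c := by positivity
  set t := s * β / c
  have ht₀ : 0 < t := by positivity
  have ht₁ : t < 1 := (div_lt_one hc).mpr (by nlinarith)
  have hunit : ∀ {γ : ℝ} {M : Set E}, 0 < γ → volume M = ENNReal.ofReal (γ ^ finrank ℝ E) →
      volume (γ⁻¹ • M) = 1 := fun hγ hM => by
    rw [Measure.addHaar_smul_of_nonneg _ (inv_nonneg.mpr hγ.le), hM,
      ← ENNReal.ofReal_mul (by positivity), ← mul_pow, inv_mul_cancel₀ hγ.ne', one_pow,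
      ENNReal.ofReal_one]
  have hset : (1 - s) • K + s • L = c • ((1 - t) • (α⁻¹ • K) + t • (β⁻¹ • L)) := by
    rw [smul_add, smul_smul, smul_smul, smul_smul, smul_smul]
    have hc' : (1 - s) * α + s * β ≠ 0 := hc.ne'
    congr 2
    · simp only [c, t]
      field_simp
      ring
    · simp only [c, t]
      field_simp
  have hcompact : ∀ {γ : ℝ} {M : Set E}, IsCompact M → IsCompact (γ • M) := fun hM =>
    hM.image (continuous_const_smul _)
  have hBM : 1 ≤ volume ((1 - t) • (α⁻¹ • K) + t • (β⁻¹ • L)) := by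
    have h := hE.volume_rpow_mul_rpow_le ht₀ ht₁ (A := α⁻¹ • K) (B := β⁻¹ • L)
      (hcompact hK).measurableSet
      (hcompact hL).measurableSet
      ((hcompact (hcompact hK)).add (hcompact (hcompact hL))).measurableSet subset_rfl
    rwa [hunit hα hKα, hunit hβ hLβ, ENNReal.one_rpow, ENNReal.one_rpow, one_mul] at h
  rw [hset, Measure.addHaar_smul_of_nonneg _ hc.le]
  exact le_mul_of_one_le_right' hBM

theorem HasDerivAt.le_of_eventually_le {f g : ℝ → ℝ} {f' g' a : ℝ} (hf : HasDerivAt f f' a)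
    (hg : HasDerivAt g g' a) (ha : f a = g a) (hfg : ∀ᶠ x in 𝓝[>] a, f x ≤ g x) : f' ≤ g' := by
  have hslope := hasDerivWithinAt_iff_tendsto_slope.mp ((hg.sub hf).hasDerivWithinAt (s := Ioi a))
  rw [sdiff_singleton_eq_self self_notMem_Ioi] at hslope
  refine sub_nonneg.mp (ge_of_tendsto hslope ?_)
  filter_upwards [hfg, self_mem_nhdsWithin] with x hx hxa
  rw [slope_def_field]
  exact div_nonneg (by simp only [Pi.sub_apply]; linarith) (sub_nonneg.mpr (le_of_lt hxa))

theorem hasDerivAt_one_sub_mul_add_mul_pow_zero (m : ℕ) (α β : ℝ) :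
    HasDerivAt (fun s => ((1 - s) * α + s * β) ^ (m + 1))
      ((m + 1) * (α ^ m * β - α ^ (m + 1))) 0 :=
  ((((hasDerivAt_id' 0).const_sub 1).mul_const α).fun_add
    ((hasDerivAt_id' 0).mul_const β)).fun_pow (m + 1) |>.congr_deriv <| by
      push_cast
      ring

def bernsteinCombination (d : ℕ) (V : ℕ → ℝ) (s : ℝ) : ℝ :=
  ∑ k ∈ Finset.range (d + 1), (d.choose k : ℝ) * (1 - s) ^ (d - k) * s ^ k * V k

theorem bernsteinCombination_zero (d : ℕ) (V : ℕ → ℝ) : bernsteinCombination d V 0 = V 0 := by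
  rw [bernsteinCombination, Finset.sum_range_succ', Finset.sum_eq_zero fun k _ => by simp]
  simp

theorem hasDerivAt_bernsteinCombination_zero (d : ℕ) (V : ℕ → ℝ) :
    HasDerivAt (bernsteinCombination d V) (d * (V 1 - V 0)) 0 := by
  rcases d with _ | m
  · have hconst : bernsteinCombination 0 V = fun _ => V 0 := by
      funext s
      simp [bernsteinCombination]
    simpa [hconst] using hasDerivAt_const (0 : ℝ) (V 0)
  have hterm : ∀ k ∈ Finset.range (m + 2), HasDerivAt
      (fun s : ℝ => ((m + 1).choose k : ℝ) * (1 - s) ^ (m + 1 - k) * s ^ k * V k)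
      (((m + 1).choose k * (((m + 1 - k : ℕ) : ℝ) * (1 - 0) ^ (m + 1 - k - 1) * -1) * 0 ^ k +
        (m + 1).choose k * (1 - 0) ^ (m + 1 - k) * (k * 0 ^ (k - 1))) * V k) 0 := fun k _ =>
    ((((hasDerivAt_id 0).const_sub 1).pow _).const_mul _ |>.mul (hasDerivAt_pow k 0)).mul_const _
  refine (HasDerivAt.fun_sum hterm).congr_deriv ?_
  rw [Finset.sum_range_succ', Finset.sum_range_succ',
    Finset.sum_eq_zero fun k _ => by simp [pow_succ]]
  simp only [zero_add, Nat.choose_one_right, Nat.cast_add, Nat.cast_one, add_tsub_cancel_right,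
    sub_zero, one_pow, mul_one, mul_neg, pow_one, mul_zero, tsub_self, pow_zero,
    Nat.choose_zero_right, tsub_zero, neg_add_rev, one_mul, CharP.cast_eq_zero, zero_tsub, add_zero]
  ring

theorem minkowski_mixed_volume_inequality_general (n : ℕ)
    (K L : Set (EuclideanSpace ℝ (Fin (n + 1))))
    (hK_compact : IsCompact K) (hK_int : (interior K).Nonempty)
    (hL_compact : IsCompact L) (hL_int : (interior L).Nonempty)
    (V : ℕ → ℝ)
    (hV : ∀ t : ℝ, 0 ≤ t → t ≤ 1 →
      (volume ((1 - t) • K + t • L)).toReal =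
        ∑ k ∈ Finset.range (n + 2),
          ((n + 1).choose k : ℝ) * (1 - t) ^ (n + 1 - k) * t ^ k * V k)
    (hV0 : V 0 = (volume K).toReal) :
    (volume K).toReal ^ n * (volume L).toReal ≤ V 1 ^ (n + 1) := by
  obtain ⟨α, hα, hKα⟩ := ENNReal.exists_pos_eq_ofReal_pow
    (Measure.measure_pos_of_nonempty_interior volume hK_int).ne' hK_compact.measure_lt_top.ne
    n.add_one_ne_zero
  obtain ⟨β, hβ, hLβ⟩ := ENNReal.exists_pos_eq_ofReal_pow
    (Measure.measure_pos_of_nonempty_interior volume hL_int).ne' hL_compact.measure_lt_top.ne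
    n.add_one_ne_zero
  have hV0' : V 0 = α ^ (n + 1) := by rw [hV0, hKα, ENNReal.toReal_ofReal (by positivity)]
  have hBM : ∀ᶠ s in 𝓝[>] 0,
      ((1 - s) * α + s * β) ^ (n + 1) ≤ bernsteinCombination (n + 1) V s := by
    filter_upwards [Ioo_mem_nhdsGT zero_lt_one] with s hs
    rw [bernsteinCombination, ← hV s hs.1.le hs.2.le, ← ENNReal.ofReal_le_iff_le_toReal
      ((hK_compact.smul _).add (hL_compact.smul _)).measure_lt_top.ne]
    have h := (SatisfiesPrekopaLeindler.euclideanSpace (n + 1)).ofReal_add_pow_finrank_le_volume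
      hK_compact hL_compact hα hβ
    rw [finrank_euclideanSpace_fin] at h
    exact h hKα hLβ hs.1 hs.2
  have hderiv := (hasDerivAt_one_sub_mul_add_mul_pow_zero n α β).le_of_eventually_le
    (hasDerivAt_bernsteinCombination_zero (n + 1) V) (by simp [bernsteinCombination_zero, hV0'])
    hBM
  have hV1 : α ^ n * β ≤ V 1 := by
    rw [hV0', Nat.cast_succ] at hderiv
    linarith [le_of_mul_le_mul_left hderiv (by positivity)]
  calc (volume K).toReal ^ n * (volume L).toReal = (α ^ n * β) ^ (n + 1) := by
        rw [hKα, hLβ, ENNReal.toReal_ofReal (by positivity), ENNReal.toReal_ofReal (by positivity)]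
        ring
    _ ≤ V 1 ^ (n + 1) := pow_le_pow_left₀ (by positivity) hV1 _

/-- Minkowski's mixed-volume inequality V₍₁₎(K,L)^{n+1} ≥ Vol(K)ⁿ · Vol(L), where the
mixed volumes are the coefficients of the polynomial expansion of Vol((1−t)K + tL). -/
theorem minkowski_mixed_volume_inequality (n : ℕ)
    (K L : Set (EuclideanSpace ℝ (Fin (n + 1))))
    (hK_compact : IsCompact K) (hK_conv : Convex ℝ K) (hK_int : (interior K).Nonempty)
    (hL_compact : IsCompact L) (hL_conv : Convex ℝ L) (hL_int : (interior L).Nonempty)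
    (V : ℕ → ℝ)
    (hV : ∀ t : ℝ, 0 ≤ t → t ≤ 1 →
      (volume ((1 - t) • K + t • L)).toReal =
        ∑ k ∈ Finset.range (n + 2),
          ((n + 1).choose k : ℝ) * (1 - t) ^ (n + 1 - k) * t ^ k * V k)
    (hV0 : V 0 = (volume K).toReal)
    (hVtop : V (n + 1) = (volume L).toReal) :
    (volume K).toReal ^ n * (volume L).toReal ≤ V 1 ^ (n + 1) :=
  minkowski_mixed_volume_inequality_general n K L hK_compact hK_int hL_compact hL_int V hV hV0
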